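/- arXiv:math/0212095 — 2 statements merged into one kernel-verified Lean document; each statement's English description precedes it below -/
import Mathlib

section
/- For a group G, the quotient of G by the image of ker(G * G → G × G) under the fold map G * G → G is canonically isomorphic to the abelianization G^{ab} of G. -/
open Monoid

/-- The fold map `G ∗ G →* G` induced by the identity on each free factor. -/
noncomputable def foldHom (G : Type*) [Group G] : Coprod G G →* G :=
  Coprod.lift (MonoidHom.id G) (MonoidHom.id G)

/-- The canonical map `G ∗ G →* G × G` from the free product to the direct product. -/
noncomputable def toProdHom (G : Type*) [Group G] : Coprod G G →* G × G :=
  Coprod.lift (MonoidHom.inl G G) (MonoidHom.inr G G)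

/-- Auxiliary hom `G × G →* Abelianization G`, `(a,b) ↦ of a * of b`. -/
noncomputable def abMul (G : Type*) [Group G] : G × G →* Abelianization G :=
  ((Abelianization.of.comp (MonoidHom.fst G G)) : G × G →* Abelianization G) *
    (Abelianization.of.comp (MonoidHom.snd G G))

lemma key (G : Type*) [Group G] :
    Subgroup.map (foldHom G) (toProdHom G).ker = commutator G := by
  apply le_antisymm
  · rintro x ⟨w, hw, rfl⟩
    have hcomp : (abMul G).comp (toProdHom G) =
        Abelianization.of.comp (foldHom G) := by
      apply Coprod.hom_ext <;> ext g <;>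
        simp [abMul, foldHom, toProdHom]
    have h1 : Abelianization.of (foldHom G w) = 1 := by
      have := congrArg (fun f : Coprod G G →* Abelianization G => f w) hcomp
      simp only [MonoidHom.comp_apply] at this
      rw [← this, MonoidHom.mem_ker.mp hw, map_one]
    have : foldHom G w ∈ (QuotientGroup.mk' (commutator G)).ker := by
      rwa [MonoidHom.mem_ker]
    rwa [QuotientGroup.ker_mk'] at this
  · rw [commutator, Subgroup.commutator_le]
    intro g _ h _
    refine ⟨Coprod.inl g * Coprod.inr h * Coprod.inl g⁻¹ * Coprod.inr h⁻¹, ?_, ?_⟩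
    · simp [MonoidHom.mem_ker, toProdHom, Prod.ext_iff]
    · simp [foldHom, commutatorElement_def]

/-- The quotient of `G` by the image of `ker(G ∗ G → G × G)` under
the fold map is canonically isomorphic to the abelianization of `G` (the isomorphism
commutes with the two canonical projections from `G`). -/
theorem stmt2 (G : Type*) [Group G]
    [hN : (Subgroup.map (foldHom G) (toProdHom G).ker).Normal] :
    ∃ e : (G ⧸ Subgroup.map (foldHom G) (toProdHom G).ker) ≃* Abelianization G,
      ∀ g : G, e ((g : G ⧸ Subgroup.map (foldHom G) (toProdHom G).ker)) =
        Abelianization.of g := by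
  exact ⟨QuotientGroup.quotientMulEquivOfEq (key G), fun g => rfl⟩
end

section
/- Let ε : ⊥₂F(X) → F(X) denote, for a functor F from pointed types to groups, the restriction of F(fold) to cr₂F(X,X) = ker(F(X ∨ X) → F(X) × F(X)). Define F'(X) = image(ε) (a normal subgroup of F(X)) and F^{ab}(X) = F(X)/F'(X). Then the functor F^{ab} (from pointed types to groups) satisfies ⊥₂F^{ab}(X) = cr₂F^{ab}(X,X) = trivial group for every pointed type X. Equivalently, the canonical map F^{ab}(X ∨ X) → F^{ab}(X) × F^{ab}(X) is injective. -/
open CategoryTheory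

universe u

/-- The wedge `X ∨ Y` of two pointed types. -/
def Wedge2 (X Y : Pointed.{u}) : Pointed.{u} where
  X := {p : X.X × Y.X // p.1 = X.point ∨ p.2 = Y.point}
  point := ⟨(X.point, Y.point), Or.inl rfl⟩

/-- The collapse map `X ∨ Y → X`. -/
def wedgeProj₁ (X Y : Pointed.{u}) : Wedge2 X Y ⟶ X where
  toFun p := p.1.1
  map_point := rfl

/-- The collapse map `X ∨ Y → Y`. -/
def wedgeProj₂ (X Y : Pointed.{u}) : Wedge2 X Y ⟶ Y where
  toFun p := p.1.2
  map_point := rfl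

/-- The fold map `X ∨ X → X`, restricting to the identity on each copy of `X`. -/
noncomputable def foldHom2 (X : Pointed.{u}) : Wedge2 X X ⟶ X := by
  classical exact
  { toFun := fun p => if p.1.1 = X.point then p.1.2 else p.1.1
    map_point := by simp [Wedge2] }

/-- The canonical map `F(X ∨ Y) →* F(X) × F(Y)` induced by the collapse maps. -/
def crossMap (F : Pointed.{u} ⥤ GrpCat.{u}) (X Y : Pointed.{u}) :
    F.obj (Wedge2 X Y) →* F.obj X × F.obj Y :=
  MonoidHom.prod (F.map (wedgeProj₁ X Y)).hom (F.map (wedgeProj₂ X Y)).hom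


/-- `F'(W)`: the image of `ε : cr₂F(W,W) → F(W)`, i.e. of the kernel of
`F(W ∨ W) → F(W) × F(W)` under `F(fold)`. -/
noncomputable def Fprime (F : Pointed.{u} ⥤ GrpCat.{u}) (W : Pointed.{u}) :
    Subgroup (F.obj W) :=
  Subgroup.map (F.map (foldHom2 W)).hom (crossMap F W W).ker

/-!
Write `a, b` for the two collapse images of `g` and `ι₁, ι₂` for the wedge inclusions. Since
`F'` is functorial and constant maps kill it, `F(ι₁)(a)` and `F(ι₂)(b)` lie in `F'(X ∨ X)`,
while `g · F(ι₂)(b)⁻¹ · F(ι₁)(a)⁻¹` lies in the cross effect `cr₂F(X, X)`. The cross effect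
lies in `F'(X ∨ X)`: the map `ι₁ ∨ ι₂` sends it into `cr₂F(X ∨ X, X ∨ X)` and is a section of
the fold map of `X ∨ X` (the comultiplication splitting `⊥₂F' → ⊥₂F`).
-/

section Wedge

variable {X Y Z W : Pointed.{u}}

def wedgeInl (X Y : Pointed.{u}) : X ⟶ Wedge2 X Y where
  toFun x := ⟨(x, Y.point), Or.inr rfl⟩
  map_point := rfl

def wedgeInr (X Y : Pointed.{u}) : Y ⟶ Wedge2 X Y where
  toFun y := ⟨(X.point, y), Or.inl rfl⟩
  map_point := rfl

def wedgeMap (f : X ⟶ Z) (g : Y ⟶ W) : Wedge2 X Y ⟶ Wedge2 Z W where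
  toFun p := ⟨(f.toFun p.1.1, g.toFun p.1.2),
    p.2.imp (fun h => by rw [h, f.map_point]) (fun h => by rw [h, g.map_point])⟩
  map_point := Subtype.ext (Prod.ext f.map_point g.map_point)

lemma wedgeInl_comp_wedgeProj₁ : wedgeInl X Y ≫ wedgeProj₁ X Y = 𝟙 X := rfl

lemma wedgeInr_comp_wedgeProj₂ : wedgeInr X Y ≫ wedgeProj₂ X Y = 𝟙 Y := rfl

lemma wedgeMap_comp_wedgeProj₁ (f : X ⟶ Z) (g : Y ⟶ W) :
    wedgeMap f g ≫ wedgeProj₁ Z W = wedgeProj₁ X Y ≫ f := rfl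

lemma wedgeMap_comp_wedgeProj₂ (f : X ⟶ Z) (g : Y ⟶ W) :
    wedgeMap f g ≫ wedgeProj₂ Z W = wedgeProj₂ X Y ≫ g := rfl

open Classical in
lemma foldHom2_toFun (p : Wedge2 X X) :
    (foldHom2 X).toFun p = if p.1.1 = X.point then p.1.2 else p.1.1 := rfl

lemma wedgeMap_comp_foldHom2 (f : X ⟶ Z) : wedgeMap f f ≫ foldHom2 Z = foldHom2 X ≫ f := by
  classical
  refine Pointed.Hom.ext (funext fun ⟨⟨x, y⟩, hp⟩ => ?_)
  show (if f.toFun x = Z.point then f.toFun y else f.toFun x) =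
    f.toFun (if x = X.point then y else x)
  split_ifs with hfx hx hx
  · rfl
  · rw [show y = X.point from hp.resolve_left hx, f.map_point, hfx]
  · exact absurd (by rw [hx]; exact f.map_point) hfx
  · rfl

lemma wedgeMap_wedgeInl_wedgeInr_comp_foldHom2 :
    wedgeMap (wedgeInl X Y) (wedgeInr X Y) ≫ foldHom2 (Wedge2 X Y) = 𝟙 _ := by
  classical
  refine Pointed.Hom.ext (funext fun ⟨⟨x, y⟩, hp⟩ => ?_)
  show (if (wedgeInl X Y).toFun x = (Wedge2 X Y).point then (wedgeInr X Y).toFun y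
    else (wedgeInl X Y).toFun x) = ⟨(x, y), hp⟩
  refine Subtype.ext ?_
  split_ifs with h
  · exact Prod.ext (congrArg (fun q => q.1.1) h).symm rfl
  · have hx : x ≠ X.point := fun hx => h (by rw [hx]; rfl)
    exact Prod.ext rfl (hp.resolve_left hx).symm

lemma foldHom2_comp_of_const (f : X ⟶ Z) (hf : ∀ x, f.toFun x = Z.point) :
    foldHom2 X ≫ f = wedgeProj₂ X X ≫ f := by
  refine Pointed.Hom.ext (funext fun p => ?_)
  simp [hf]

end Wedge

section CrossEffect

variable (F : Pointed.{u} ⥤ GrpCat.{u}) {X Y Z W : Pointed.{u}}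

lemma grpCat_map_comp_apply {A B C : Pointed.{u}} (f : A ⟶ B) (g : B ⟶ C) (x : F.obj A) :
    F.map (f ≫ g) x = F.map g (F.map f x) := by
  rw [F.map_comp, GrpCat.comp_apply]

lemma mem_ker_crossMap {k : F.obj (Wedge2 X Y)} :
    k ∈ (crossMap F X Y).ker ↔
      F.map (wedgeProj₁ X Y) k = 1 ∧ F.map (wedgeProj₂ X Y) k = 1 := by
  rw [MonoidHom.mem_ker, crossMap, MonoidHom.prod_apply, Prod.mk_eq_one]

lemma map_wedgeMap_mem_ker_crossMap (f : X ⟶ Z) (g : Y ⟶ W) {k : F.obj (Wedge2 X Y)}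
    (hk : k ∈ (crossMap F X Y).ker) : F.map (wedgeMap f g) k ∈ (crossMap F Z W).ker := by
  rw [mem_ker_crossMap] at hk ⊢
  rw [← grpCat_map_comp_apply, ← grpCat_map_comp_apply, wedgeMap_comp_wedgeProj₁,
    wedgeMap_comp_wedgeProj₂, grpCat_map_comp_apply, grpCat_map_comp_apply, hk.1, hk.2,
    map_one, map_one]
  exact ⟨rfl, rfl⟩

lemma map_mem_Fprime (f : X ⟶ Z) {x : F.obj X} (hx : x ∈ Fprime F X) :
    F.map f x ∈ Fprime F Z := by
  obtain ⟨k, hk, rfl⟩ := hx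
  refine ⟨F.map (wedgeMap f f) k, map_wedgeMap_mem_ker_crossMap F f f hk, ?_⟩
  change F.map (foldHom2 Z) (F.map (wedgeMap f f) k) = F.map f (F.map (foldHom2 X) k)
  rw [← grpCat_map_comp_apply, ← grpCat_map_comp_apply, wedgeMap_comp_foldHom2]

lemma map_eq_one_of_mem_Fprime (f : X ⟶ Z) (hf : ∀ x, f.toFun x = Z.point) {x : F.obj X}
    (hx : x ∈ Fprime F X) : F.map f x = 1 := by
  obtain ⟨k, hk, rfl⟩ := hx
  change F.map f (F.map (foldHom2 X) k) = 1
  rw [← grpCat_map_comp_apply, foldHom2_comp_of_const f hf, grpCat_map_comp_apply,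
    ((mem_ker_crossMap F).1 hk).2, map_one]

lemma ker_crossMap_le_Fprime : (crossMap F X Y).ker ≤ Fprime F (Wedge2 X Y) := fun k hk =>
  ⟨F.map (wedgeMap (wedgeInl X Y) (wedgeInr X Y)) k, map_wedgeMap_mem_ker_crossMap F _ _ hk, by
    change F.map (foldHom2 _) (F.map (wedgeMap (wedgeInl X Y) (wedgeInr X Y)) k) = k
    rw [← grpCat_map_comp_apply, wedgeMap_wedgeInl_wedgeInr_comp_foldHom2, F.map_id]
    rfl⟩

end CrossEffect

/-- With `F^{ab}(W) = F(W)/F'(W)`, the second cross effect of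
`F^{ab}` vanishes on the diagonal: the canonical map
`F^{ab}(X ∨ X) → F^{ab}(X) × F^{ab}(X)` is injective.  Equivalently (as stated
here), any `g : F(X ∨ X)` whose two collapse images lie in `F'(X)` already lies
in `F'(X ∨ X)`. -/
theorem stmt14 (F : Pointed.{u} ⥤ GrpCat.{u}) (X : Pointed.{u})
    (g : F.obj (Wedge2 X X))
    (h1 : F.map (wedgeProj₁ X X) g ∈ Fprime F X)
    (h2 : F.map (wedgeProj₂ X X) g ∈ Fprime F X) :
    g ∈ Fprime F (Wedge2 X X) := by
  set a := F.map (wedgeProj₁ X X) g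
  set b := F.map (wedgeProj₂ X X) g
  set a' := F.map (wedgeInl X X) a
  set b' := F.map (wedgeInr X X) b
  have ha₁ : F.map (wedgeProj₁ X X) a' = a := by
    rw [← grpCat_map_comp_apply, wedgeInl_comp_wedgeProj₁, F.map_id]; rfl
  have hb₂ : F.map (wedgeProj₂ X X) b' = b := by
    rw [← grpCat_map_comp_apply, wedgeInr_comp_wedgeProj₂, F.map_id]; rfl
  have ha₂ : F.map (wedgeProj₂ X X) a' = 1 := by
    rw [← grpCat_map_comp_apply]; exact map_eq_one_of_mem_Fprime F _ (fun _ => rfl) h1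
  have hb₁ : F.map (wedgeProj₁ X X) b' = 1 := by
    rw [← grpCat_map_comp_apply]; exact map_eq_one_of_mem_Fprime F _ (fun _ => rfl) h2
  have hcross : g * b'⁻¹ * a'⁻¹ ∈ (crossMap F X X).ker := by
    rw [mem_ker_crossMap]
    simp only [map_mul, map_inv, ha₁, ha₂, hb₁, hb₂, inv_one, mul_one]
    exact ⟨mul_inv_cancel a, mul_inv_cancel b⟩
  have hg : g = g * b'⁻¹ * a'⁻¹ * a' * b' := by group
  rw [hg]
  exact mul_mem (mul_mem (ker_crossMap_le_Fprime F hcross) (map_mem_Fprime F _ h1))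
    (map_mem_Fprime F _ h2)
end
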